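/- arXiv:2404.14442 — 2 statements merged into one kernel-verified Lean document; each statement's English description precedes it below -/
import Mathlib

section
/- For any x_1,...,x_n ∈ R and any λ > 0, the Boltzmann softmax operator is bounded by the log-sum-exp operator: h_bz^λ(x) ≤ h_lse^λ(x) ≤ h_bz^λ(x) + ln(n)/λ. -/
open Finset Real

theorem stmt_7 (n : ℕ) (hn : 0 < n) (x : Fin n → ℝ) (l : ℝ) (hl : 0 < l) :
    (∑ i, x i * Real.exp (l * x i)) / (∑ i, Real.exp (l * x i))
      ≤ (1 / l) * Real.log (∑ i, Real.exp (l * x i)) ∧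
    (1 / l) * Real.log (∑ i, Real.exp (l * x i))
      ≤ (∑ i, x i * Real.exp (l * x i)) / (∑ i, Real.exp (l * x i)) + Real.log n / l := by
  set S := ∑ i, Real.exp (l * x i) with hSdef
  have hSpos : 0 < S :=
    Finset.sum_pos (fun i _ => Real.exp_pos _) ⟨⟨0, hn⟩, Finset.mem_univ _⟩
  have hle : ∀ i : Fin n, x i ≤ 1 / l * Real.log S := by
    intro i
    have h1 : Real.exp (l * x i) ≤ S :=
      Finset.single_le_sum (fun j _ => (Real.exp_pos (l * x j)).le) (Finset.mem_univ i)
    have h2 : l * x i ≤ Real.log S := by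
      have := Real.log_le_log (Real.exp_pos _) h1
      rwa [Real.log_exp] at this
    rw [one_div, inv_mul_eq_div, le_div_iff₀ hl]
    linarith [h2]
  constructor
  · rw [div_le_iff₀ hSpos]
    calc ∑ i, x i * Real.exp (l * x i)
        ≤ ∑ i, (1 / l * Real.log S) * Real.exp (l * x i) := by
          refine Finset.sum_le_sum fun i _ => ?_
          exact mul_le_mul_of_nonneg_right (hle i) (Real.exp_pos _).le
      _ = 1 / l * Real.log S * S := by rw [← Finset.mul_sum]
  · -- entropy bound via Jensen
    set p : Fin n → ℝ := fun i => Real.exp (l * x i) / S with hp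
    have hppos : ∀ i, 0 < p i := fun i => div_pos (Real.exp_pos _) hSpos
    have hpsum : ∑ i, p i = 1 := by
      rw [hp, ← Finset.sum_div, div_self hSpos.ne']
    have jensen : ∑ i, p i • Real.log (1 / p i) ≤ Real.log (∑ i, p i • (1 / p i)) := by
      apply strictConcaveOn_log_Ioi.concaveOn.le_map_sum
        (fun i _ => (hppos i).le) hpsum
      intro i _
      exact Set.mem_Ioi.mpr (one_div_pos.mpr (hppos i))
    have hsum1 : ∑ i, p i • (1 / p i) = (n : ℝ) := by
      have : ∀ i : Fin n, p i • (1 / p i) = 1 := fun i => by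
        rw [smul_eq_mul, mul_one_div, div_self (hppos i).ne']
      simp only [this, Finset.sum_const, Finset.card_univ, Fintype.card_fin, nsmul_eq_mul, mul_one]
    rw [hsum1] at jensen
    have hlog : ∀ i, Real.log (1 / p i) = Real.log S - l * x i := by
      intro i
      rw [hp]
      simp only [one_div, Real.log_inv, Real.log_div (Real.exp_pos _).ne' hSpos.ne',
        Real.log_exp]
      ring
    have hleft : ∑ i, p i • Real.log (1 / p i)
        = Real.log S - l * ((∑ i, x i * Real.exp (l * x i)) / S) := by
      have : ∀ i : Fin n, p i • Real.log (1 / p i)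
          = p i * Real.log S - l * (x i * Real.exp (l * x i) / S) := by
        intro i
        rw [hlog i, smul_eq_mul, hp]
        field_simp
      rw [Finset.sum_congr rfl (fun i _ => this i), Finset.sum_sub_distrib,
        ← Finset.sum_mul, hpsum, ← Finset.mul_sum, ← Finset.sum_div]
      ring
    rw [hleft] at jensen
    have hB : Real.log S ≤ l * ((∑ i, x i * Real.exp (l * x i)) / S) + Real.log n := by
      linarith
    rw [one_div, inv_mul_eq_div, div_le_iff₀ hl]
    have : Real.log n / l * l = Real.log n := by field_simp
    calc Real.log S ≤ l * ((∑ i, x i * Real.exp (l * x i)) / S) + Real.log n := hB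
      _ = ((∑ i, x i * Real.exp (l * x i)) / S + Real.log n / l) * l := by field_simp
end

section
/- The mellowmax operator is non-expansive in the infinity norm: for any x, y ∈ R^n and λ > 0, |h_mm^λ(x) − h_mm^λ(y)| ≤ max_i |x_i − y_i|. -/
open Finset Real

lemma aux_key (n : ℕ) (hn : 0 < n) (l : ℝ) (hl : 0 < l) (x y : Fin n → ℝ)
    (M : ℝ) (hM : ∀ i, x i - y i ≤ M) :
    Real.log ((1 / n) * ∑ i, Real.exp (l * x i)) -
      Real.log ((1 / n) * ∑ i, Real.exp (l * y i)) ≤ l * M := by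
  have hne : (Finset.univ : Finset (Fin n)).Nonempty := ⟨⟨0, hn⟩, Finset.mem_univ _⟩
  have hA : 0 < ∑ i, Real.exp (l * x i) :=
    Finset.sum_pos (fun i _ => Real.exp_pos _) hne
  have hB : 0 < ∑ i, Real.exp (l * y i) :=
    Finset.sum_pos (fun i _ => Real.exp_pos _) hne
  have hninv : (0:ℝ) < 1 / n := by positivity
  have hsum : ∑ i, Real.exp (l * x i) ≤ Real.exp (l * M) * ∑ i, Real.exp (l * y i) := by
    rw [Finset.mul_sum]
    refine Finset.sum_le_sum fun i _ => ?_
    rw [← Real.exp_add]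
    apply Real.exp_le_exp.2
    have := hM i
    nlinarith
  have h1 : (1 / n) * ∑ i, Real.exp (l * x i)
      ≤ Real.exp (l * M) * ((1 / n) * ∑ i, Real.exp (l * y i)) := by
    have := mul_le_mul_of_nonneg_left hsum hninv.le
    linarith [this, show (1/(n:ℝ)) * (Real.exp (l*M) * ∑ i, Real.exp (l * y i))
      = Real.exp (l*M) * ((1/(n:ℝ)) * ∑ i, Real.exp (l * y i)) from by ring]
  have h2 := Real.log_le_log (by positivity) h1
  rw [Real.log_mul (Real.exp_pos _).ne' (by positivity), Real.log_exp] at h2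
  linarith

theorem stmt_15 (n : ℕ) (hn : 0 < n) (l : ℝ) (hl : 0 < l) (x y : Fin n → ℝ) :
    |(1 / l) * Real.log ((1 / n) * ∑ i, Real.exp (l * x i)) -
        (1 / l) * Real.log ((1 / n) * ∑ i, Real.exp (l * y i))|
      ≤ Finset.univ.sup' ⟨⟨0, hn⟩, Finset.mem_univ _⟩ (fun i => |x i - y i|) := by
  set M := Finset.univ.sup' ⟨⟨0, hn⟩, Finset.mem_univ _⟩ (fun i => |x i - y i|) with hMdef
  have hM1 : ∀ i, x i - y i ≤ M := fun i =>
    le_trans (le_abs_self _) (Finset.le_sup' (fun i => |x i - y i|) (Finset.mem_univ i))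
  have hM2 : ∀ i, y i - x i ≤ M := fun i =>
    le_trans (by rw [abs_sub_comm]; exact le_abs_self _)
      (Finset.le_sup' (fun i => |x i - y i|) (Finset.mem_univ i))
  have k1 := aux_key n hn l hl x y M hM1
  have k2 := aux_key n hn l hl y x M hM2
  rw [abs_sub_le_iff]
  constructor
  · rw [← mul_sub]
    rw [one_div]
    rw [inv_mul_le_iff₀ hl]
    linarith
  · rw [← mul_sub, one_div, inv_mul_le_iff₀ hl]
    linarith
end
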